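/- Upper bound of the energy by the second-order objective, smooth potential case (Proposition 3.2, second part): assume γ ∈ L¹(G) is even and positive semidefinite, ψ : ℝ → ℝ is twice differentiable on [−ρ, ρ] with |ψ''(s)| ≤ C for all s ∈ [−ρ, ρ], and τ(ξ + C) ≤ 2. Then E(u) ≤ J²(u) for every u ∈ L²(G) with |u| ≤ ρ a.e. -/

import Mathlib

open MeasureTheory

noncomputable section

/-- The `n`-dimensional torus: product of circles `ℝ/(Lᵢℤ)`. -/
abbrev Torus (n : ℕ) (L : Fin n → ℝ) := Π i : Fin n, AddCircle (L i)

variable {n : ℕ} {L : Fin n → ℝ} [∀ i, Fact (0 < L i)]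

/-- The `L²` inner product `(u,v) = ∫ u v`. -/
def ip (u v : Torus n L → ℝ) : ℝ := ∫ x, u x * v x

/-- The convolution `(γ*u)(x) = ∫ γ(x-y) u(y) dy`. -/
def conv (γ u : Torus n L → ℝ) : Torus n L → ℝ := fun x => ∫ y, γ (x - y) * u y

/-- `g(u) = (ξ/2)‖u‖² + c`. -/
def gfun (ξ c : ℝ) (u : Torus n L → ℝ) : ℝ := ξ / 2 * ip u u + c

/-- `f(u) = −(1/2)(γ*u, u)`. -/
def ffun (γ : Torus n L → ℝ) (u : Torus n L → ℝ) : ℝ := -(1 / 2) * ip (conv γ u) u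

/-- Energy for a smooth potential `ψ`: `E(u) = g(u) + f(u) + ∫ ψ(u(x)) dx`. -/
def energySmooth (γ : Torus n L → ℝ) (ξ c : ℝ) (ψ : ℝ → ℝ) (u : Torus n L → ℝ) : ℝ :=
  gfun ξ c u + ffun γ u + ∫ x, ψ (u x)

/-- Second-order implicit objective with previous iterate `v` for a smooth potential:
`J²(u) = (1/(2τ))‖u−v‖² + (1/2)(g(v)+g(u)) + (1/2)(f(v)+f(u)) − (1/2)(γ*v, u−v)
        + (ξ/2)(v, u−v) + ∫ [ (1/2)(ψ(u)+ψ(v)) + (1/2)ψ'(v)(u−v) ]`. -/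
def objJ2Smooth (γ : Torus n L → ℝ) (τ ξ c : ℝ) (ψ ψ' : ℝ → ℝ) (v u : Torus n L → ℝ) : ℝ :=
  1 / (2 * τ) * ip (u - v) (u - v) + 1 / 2 * (gfun ξ c v + gfun ξ c u)
    + 1 / 2 * (ffun γ v + ffun γ u) - 1 / 2 * ip (conv γ v) (u - v)
    + ξ / 2 * ip v (u - v)
    + ∫ x, (1 / 2 * (ψ (u x) + ψ (v x)) + 1 / 2 * ψ' (v x) * (u x - v x))

/- ### Auxiliary lemmas -/

section AuxLemmas

open Set

/-- Second-order Taylor-type bound from a bound on the second derivative. -/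
lemma taylor2_bound {ρ C : ℝ} (ψ ψ' ψ'' : ℝ → ℝ)
    (hψ : ∀ s ∈ Icc (-ρ) ρ, HasDerivWithinAt ψ (ψ' s) (Icc (-ρ) ρ) s)
    (hψ' : ∀ s ∈ Icc (-ρ) ρ, HasDerivWithinAt ψ' (ψ'' s) (Icc (-ρ) ρ) s)
    (hψ'' : ∀ s ∈ Icc (-ρ) ρ, |ψ'' s| ≤ C)
    {a b : ℝ} (ha : a ∈ Icc (-ρ) ρ) (hb : b ∈ Icc (-ρ) ρ) :
    ψ a - ψ b - ψ' b * (a - b) ≤ C / 2 * (a - b) ^ 2 := by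
  have hconv : Convex ℝ (Icc (-ρ) ρ) := convex_Icc _ _
  have hlip : ∀ s ∈ Icc (-ρ) ρ, ∀ t ∈ Icc (-ρ) ρ, |ψ' s - ψ' t| ≤ C * |s - t| := by
    intro s hs t ht
    have bound : ∀ x ∈ Icc (-ρ) ρ, ‖ψ'' x‖ ≤ C := fun x hx => by
      simpa [Real.norm_eq_abs] using hψ'' x hx
    simpa [Real.norm_eq_abs] using
      hconv.norm_image_sub_le_of_norm_hasDerivWithin_le hψ' bound ht hs
  set d := a - b with hd
  have hline : ∀ t : ℝ, t ∈ Icc (0:ℝ) 1 → b + t * d ∈ Icc (-ρ) ρ := by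
    intro t ht
    have := hconv.add_smul_sub_mem hb ha ht
    simpa [hd, smul_eq_mul] using this
  set h : ℝ → ℝ := fun t => ψ (b + t * d) - ψ' b * d * t - C / 2 * d ^ 2 * t ^ 2 with hh
  have hderiv : ∀ t ∈ Icc (0:ℝ) 1,
      HasDerivWithinAt h (ψ' (b + t * d) * d - ψ' b * d - C * d ^ 2 * t) (Icc 0 1) t := by
    intro t ht
    have hl : HasDerivWithinAt (fun t : ℝ => b + t * d) d (Icc 0 1) t := by
      simpa using (((hasDerivAt_id t).mul_const d).const_add b).hasDerivWithinAt
    have hcomp : HasDerivWithinAt (fun t : ℝ => ψ (b + t * d)) (ψ' (b + t * d) * d) (Icc 0 1) t :=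
      (hψ _ (hline t ht)).comp t hl hline
    have h2 : HasDerivWithinAt (fun t : ℝ => ψ' b * d * t) (ψ' b * d) (Icc 0 1) t := by
      simpa using ((hasDerivAt_id t).const_mul (ψ' b * d)).hasDerivWithinAt
    have h3 : HasDerivWithinAt (fun t : ℝ => C / 2 * d ^ 2 * t ^ 2) (C * d ^ 2 * t) (Icc 0 1) t := by
      have := ((hasDerivAt_pow 2 t).const_mul (C / 2 * d ^ 2)).hasDerivWithinAt (s := Icc (0:ℝ) 1)
      refine this.congr_deriv ?_
      norm_num
      ring
    exact (hcomp.sub h2).sub h3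
  have hanti : AntitoneOn h (Icc 0 1) := by
    apply antitoneOn_of_hasDerivWithinAt_nonpos (convex_Icc 0 1)
      (fun t ht => (hderiv t ht).continuousWithinAt)
      (f' := fun t => ψ' (b + t * d) * d - ψ' b * d - C * d ^ 2 * t)
      (fun t ht => ((hderiv t (interior_subset ht)).mono interior_subset))
    intro t ht
    rw [interior_Icc] at ht
    have ht' : t ∈ Icc (0:ℝ) 1 := Ioo_subset_Icc_self ht
    have hLB := hlip _ (hline t ht') _ hb
    have habs : |b + t * d - b| = t * |d| := by
      rw [add_sub_cancel_left, abs_mul, abs_of_nonneg ht'.1]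
    have h1 : (ψ' (b + t * d) - ψ' b) * d ≤ C * (t * |d|) * |d| := by
      calc (ψ' (b + t * d) - ψ' b) * d ≤ |(ψ' (b + t * d) - ψ' b) * d| := le_abs_self _
        _ = |ψ' (b + t * d) - ψ' b| * |d| := abs_mul _ _
        _ ≤ C * |b + t * d - b| * |d| := by
            apply mul_le_mul_of_nonneg_right (hLB) (abs_nonneg _)
        _ = C * (t * |d|) * |d| := by rw [habs]
    have : C * (t * |d|) * |d| = C * d ^ 2 * t := by
      linear_combination C * t * abs_mul_abs_self d
    nlinarith [h1]
  have h10 : h 1 ≤ h 0 := hanti (left_mem_Icc.2 zero_le_one) (right_mem_Icc.2 zero_le_one) zero_le_one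
  simp only [hh] at h10
  norm_num at h10
  have : b + d = a := by rw [hd]; ring
  rw [this] at h10
  linarith

instance torusNegInvariant : (volume : Measure (Torus n L)).IsNegInvariant :=
  Measure.IsAddHaarMeasure.isNegInvariant_of_regular _

lemma tb_integrable {f : Torus n L → ℝ} {M : ℝ} (hf : AEStronglyMeasurable f volume)
    (hM : ∀ᵐ x, |f x| ≤ M) : Integrable f volume :=
  Integrable.mono' (integrable_const M) hf (by simpa [Real.norm_eq_abs] using hM)

lemma tb_integrable_mul {f g : Torus n L → ℝ} {M N : ℝ}
    (hf : AEStronglyMeasurable f volume) (hg : AEStronglyMeasurable g volume)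
    (hfM : ∀ᵐ x, |f x| ≤ M) (hgN : ∀ᵐ x, |g x| ≤ N) :
    Integrable (fun x => f x * g x) volume := by
  refine tb_integrable (M := M * N) (hf.mul hg) ?_
  filter_upwards [hfM, hgN] with x h1 h2
  calc |f x * g x| = |f x| * |g x| := abs_mul _ _
    _ ≤ M * |g x| := mul_le_mul_of_nonneg_right h1 (abs_nonneg _)
    _ ≤ M * N := mul_le_mul_of_nonneg_left h2 ((abs_nonneg _).trans h1)

lemma conv_integrand_integrable (γ : Torus n L → ℝ) (hγ : Integrable γ)
    {u : Torus n L → ℝ} {M : ℝ} (hu : AEStronglyMeasurable u volume)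
    (huM : ∀ᵐ y, |u y| ≤ M) (x : Torus n L) :
    Integrable (fun y => γ (x - y) * u y) volume := by
  have h1 : Integrable (fun y => γ (x - y)) volume :=
    ((Measure.measurePreserving_sub_left volume x).integrable_comp
      hγ.aestronglyMeasurable).2 hγ
  have h2 : Integrable (fun y => u y * γ (x - y)) volume :=
    Integrable.bdd_mul h1 hu (by simpa [Real.norm_eq_abs] using huM)
  exact h2.congr (Filter.Eventually.of_forall fun y => mul_comm _ _)

lemma conv_norm_integral_le (γ : Torus n L → ℝ) (hγ : Integrable γ)
    {u : Torus n L → ℝ} {M : ℝ} (hu : AEStronglyMeasurable u volume)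
    (huM : ∀ᵐ y, |u y| ≤ M) (x : Torus n L) :
    ∫ y, |γ (x - y) * u y| ≤ M * ∫ z, |γ z| := by
  have h1 : Integrable (fun y => γ (x - y)) volume :=
    ((Measure.measurePreserving_sub_left volume x).integrable_comp
      hγ.aestronglyMeasurable).2 hγ
  have h2 : ∫ y, |γ (x - y) * u y| ≤ ∫ y, |γ (x - y)| * M := by
    refine integral_mono_ae (conv_integrand_integrable γ hγ hu huM x).abs
      (h1.abs.mul_const M) ?_
    filter_upwards [huM] with y hy
    rw [abs_mul]
    exact mul_le_mul_of_nonneg_left hy (abs_nonneg _)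
  have h3 : ∫ y, |γ (x - y)| * M = (∫ z, |γ z|) * M := by
    rw [integral_mul_const]
    congr 1
    exact integral_sub_left_eq_self (fun z => |γ z|) volume x
  rw [h3, mul_comm] at h2
  exact h2

lemma conv_bound (γ : Torus n L → ℝ) (hγ : Integrable γ)
    {u : Torus n L → ℝ} {M : ℝ} (hu : AEStronglyMeasurable u volume)
    (huM : ∀ᵐ y, |u y| ≤ M) (x : Torus n L) :
    |conv γ u x| ≤ M * ∫ z, |γ z| := by
  have h0 : |conv γ u x| ≤ ∫ y, |γ (x - y) * u y| := by
    have := norm_integral_le_integral_norm (μ := (volume : Measure (Torus n L)))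
        (f := fun y => γ (x - y) * u y)
    simpa only [conv, Real.norm_eq_abs] using this
  exact h0.trans (conv_norm_integral_le γ hγ hu huM x)

lemma convF_aesm (γ : Torus n L → ℝ) (hγ : Integrable γ) :
    AEStronglyMeasurable (fun p : Torus n L × Torus n L => γ (p.1 - p.2))
      ((volume : Measure (Torus n L)).prod volume) := by
  have h1 : AEStronglyMeasurable (fun p : Torus n L × Torus n L => γ p.1)
      ((volume : Measure (Torus n L)).prod volume) :=
    hγ.aestronglyMeasurable.comp_quasiMeasurePreserving Measure.quasiMeasurePreserving_fst
  exact h1.comp_quasiMeasurePreserving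
    (measurePreserving_sub_prod volume volume).quasiMeasurePreserving

lemma convF_integrable (γ : Torus n L → ℝ) (hγ : Integrable γ) :
    Integrable (fun p : Torus n L × Torus n L => γ (p.1 - p.2))
      ((volume : Measure (Torus n L)).prod volume) := by
  have h1aesm : AEStronglyMeasurable (fun p : Torus n L × Torus n L => γ p.1)
      ((volume : Measure (Torus n L)).prod volume) :=
    hγ.aestronglyMeasurable.comp_quasiMeasurePreserving Measure.quasiMeasurePreserving_fst
  have h1 : Integrable (fun p : Torus n L × Torus n L => γ p.1)
      ((volume : Measure (Torus n L)).prod volume) := by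
    refine (integrable_map_measure ?_ measurable_fst.aemeasurable).1 ?_
    · rw [Measure.map_fst_prod]
      exact hγ.aestronglyMeasurable.mono_ac (Measure.smul_absolutelyContinuous)
    · rw [Measure.map_fst_prod]
      exact hγ.smul_measure (measure_ne_top _ _)
  exact ((measurePreserving_sub_prod volume volume).integrable_comp h1aesm).2 h1

lemma conv_aesm (γ : Torus n L → ℝ) (hγ : Integrable γ)
    {u : Torus n L → ℝ} (hu : AEStronglyMeasurable u volume) :
    AEStronglyMeasurable (conv γ u) volume := by
  have hF : AEStronglyMeasurable
      (fun p : Torus n L × Torus n L => γ (p.1 - p.2) * u p.2)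
      ((volume : Measure (Torus n L)).prod volume) :=
    (convF_aesm γ hγ).mul (hu.comp_quasiMeasurePreserving Measure.quasiMeasurePreserving_snd)
  exact hF.integral_prod_right'

lemma conv_sub (γ : Torus n L → ℝ) (hγ : Integrable γ)
    {u v : Torus n L → ℝ} {M N : ℝ}
    (hu : AEStronglyMeasurable u volume) (hv : AEStronglyMeasurable v volume)
    (huM : ∀ᵐ y, |u y| ≤ M) (hvN : ∀ᵐ y, |v y| ≤ N) (x : Torus n L) :
    conv γ (u - v) x = conv γ u x - conv γ v x := by
  show ∫ y, γ (x - y) * (u - v) y = (∫ y, γ (x - y) * u y) - ∫ y, γ (x - y) * v y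
  rw [← integral_sub (conv_integrand_integrable γ hγ hu huM x)
    (conv_integrand_integrable γ hγ hv hvN x)]
  congr 1
  funext y
  simp only [Pi.sub_apply]
  ring

lemma ip_conv_symm (γ : Torus n L → ℝ) (hγ : Integrable γ)
    (hγeven : ∀ᵐ x, γ (-x) = γ x)
    {u v : Torus n L → ℝ} {M N : ℝ}
    (hu : AEStronglyMeasurable u volume) (hv : AEStronglyMeasurable v volume)
    (huM : ∀ᵐ y, |u y| ≤ M) (hvN : ∀ᵐ y, |v y| ≤ N) :
    ip (conv γ u) v = ip (conv γ v) u := by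
  have huP : ∀ᵐ p ∂((volume : Measure (Torus n L)).prod volume), |u p.2| ≤ M :=
    (Measure.quasiMeasurePreserving_snd (μ := (volume : Measure (Torus n L)))
      (ν := (volume : Measure (Torus n L)))).tendsto_ae.eventually huM
  have hvP : ∀ᵐ p ∂((volume : Measure (Torus n L)).prod volume), |v p.1| ≤ N :=
    (Measure.quasiMeasurePreserving_fst (μ := (volume : Measure (Torus n L)))
      (ν := (volume : Measure (Torus n L)))).tendsto_ae.eventually hvN
  have hFint : Integrable
      (fun p : Torus n L × Torus n L => γ (p.1 - p.2) * u p.2 * v p.1)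
      ((volume : Measure (Torus n L)).prod volume) := by
    have h0 : Integrable
        (fun p : Torus n L × Torus n L => (u p.2 * v p.1) * γ (p.1 - p.2))
        ((volume : Measure (Torus n L)).prod volume) := by
      refine Integrable.bdd_mul (c := M * N) (convF_integrable γ hγ)
        ((hu.comp_quasiMeasurePreserving Measure.quasiMeasurePreserving_snd).mul
          (hv.comp_quasiMeasurePreserving Measure.quasiMeasurePreserving_fst)) ?_
      filter_upwards [huP, hvP] with p h1 h2
      rw [Real.norm_eq_abs, abs_mul]
      calc |u p.2| * |v p.1| ≤ M * |v p.1| := mul_le_mul_of_nonneg_right h1 (abs_nonneg _)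
        _ ≤ M * N := mul_le_mul_of_nonneg_left h2 ((abs_nonneg _).trans h1)
    exact h0.congr (Filter.Eventually.of_forall fun p => by ring)
  have step1 : ip (conv γ u) v = ∫ x, ∫ y, γ (x - y) * u y * v x := by
    unfold ip conv
    simp_rw [integral_mul_const]
  have step2 : (∫ x, ∫ y, γ (x - y) * u y * v x ∂(volume : Measure (Torus n L))
        ∂(volume : Measure (Torus n L)))
      = ∫ y, ∫ x, γ (x - y) * u y * v x := integral_integral_swap hFint
  have step3 : ∀ y : Torus n L, (∫ x, γ (x - y) * u y * v x) = conv γ v y * u y := by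
    intro y
    have hbase : (fun z : Torus n L => γ (-z)) =ᶠ[ae (volume : Measure (Torus n L))] γ :=
      hγeven
    have hcomp := ((measurePreserving_sub_right (volume : Measure (Torus n L))
      y).quasiMeasurePreserving).ae_eq hbase
    have heq : (fun x : Torus n L => γ (x - y)) =ᶠ[ae (volume : Measure (Torus n L))]
        (fun x => γ (y - x)) := by
      have h2 : (fun x : Torus n L => γ (-(x - y))) =ᶠ[ae (volume : Measure (Torus n L))]
          (fun x => γ (x - y)) := hcomp
      simp only [neg_sub] at h2
      exact h2.symm
    calc (∫ x, γ (x - y) * u y * v x) = ∫ x, γ (y - x) * v x * u y := by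
          refine integral_congr_ae ?_
          filter_upwards [heq] with x hx
          rw [hx]; ring
      _ = (∫ x, γ (y - x) * v x) * u y := integral_mul_const _ _
      _ = conv γ v y * u y := rfl
  rw [step1, step2]
  exact integral_congr_ae (Filter.Eventually.of_forall step3)

lemma ip_sub_sub {a b c d : Torus n L → ℝ}
    (h1 : Integrable (fun x => a x * c x) volume) (h2 : Integrable (fun x => a x * d x) volume)
    (h3 : Integrable (fun x => b x * c x) volume) (h4 : Integrable (fun x => b x * d x) volume) :
    ∫ x, (a x - b x) * (c x - d x)
      = ((∫ x, a x * c x) - ∫ x, a x * d x) - ((∫ x, b x * c x) - ∫ x, b x * d x) := by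
  have hA : Integrable (fun x => a x * c x - a x * d x) volume := h1.sub h2
  have hB : Integrable (fun x => b x * c x - b x * d x) volume := h3.sub h4
  rw [← integral_sub h1 h2, ← integral_sub h3 h4, ← integral_sub hA hB]
  congr 1
  funext x
  ring

lemma ip_mul_sub {a c d : Torus n L → ℝ}
    (h1 : Integrable (fun x => a x * c x) volume) (h2 : Integrable (fun x => a x * d x) volume) :
    ∫ x, a x * (c x - d x) = (∫ x, a x * c x) - ∫ x, a x * d x := by
  rw [← integral_sub h1 h2]
  congr 1
  funext x
  ring

end AuxLemmas

/-- **Upper bound of the energy by the second-order objective, smooth potential case**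
(Proposition 3.2, second part): if `γ ∈ L¹` is even and positive semidefinite, `ψ` is twice
differentiable on `[−ρ,ρ]` with `|ψ''| ≤ C` there, and `τ(ξ + C) ≤ 2`, then `E(u) ≤ J²(u)`
for every `u ∈ L²` with `|u| ≤ ρ` a.e. -/
theorem energy_le_objJ2_smooth
    {n : ℕ} (hn : 1 ≤ n) {L : Fin n → ℝ} [∀ i, Fact (0 < L i)]
    (γ : Torus n L → ℝ) (hγL1 : Integrable γ)
    (hγeven : ∀ᵐ x, γ (-x) = γ x)
    (hγpsd : ∀ w : Torus n L → ℝ, MemLp w 2 → 0 ≤ ip (conv γ w) w)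
    (ρ : ℝ) (hρ : 0 < ρ) (C : ℝ) (hC : 0 ≤ C)
    (ψ ψ' ψ'' : ℝ → ℝ)
    (hψ : ∀ s ∈ Set.Icc (-ρ) ρ, HasDerivWithinAt ψ (ψ' s) (Set.Icc (-ρ) ρ) s)
    (hψ' : ∀ s ∈ Set.Icc (-ρ) ρ, HasDerivWithinAt ψ' (ψ'' s) (Set.Icc (-ρ) ρ) s)
    (hψ'' : ∀ s ∈ Set.Icc (-ρ) ρ, |ψ'' s| ≤ C)
    (τ : ℝ) (hτ : 0 < τ) (ξ : ℝ) (hξ : 0 ≤ ξ) (hstep : τ * (ξ + C) ≤ 2) (c : ℝ)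
    (v : Torus n L → ℝ) (hv2 : MemLp v 2) (hvρ : ∀ᵐ x, |v x| ≤ ρ) :
    ∀ u : Torus n L → ℝ, MemLp u 2 → (∀ᵐ x, |u x| ≤ ρ) →
      energySmooth γ ξ c ψ u ≤ objJ2Smooth γ τ ξ c ψ ψ' v u := by
  intro u hu2 huρ
  have hρρ : -ρ ≤ ρ := by linarith
  have huA : AEStronglyMeasurable u volume := hu2.aestronglyMeasurable
  have hvA : AEStronglyMeasurable v volume := hv2.aestronglyMeasurable
  have hwA : AEStronglyMeasurable (fun x => u x - v x) volume := huA.sub hvA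
  have hwρ : ∀ᵐ x, |u x - v x| ≤ ρ + ρ := by
    filter_upwards [huρ, hvρ] with x h1 h2
    calc |u x - v x| ≤ |u x| + |v x| := abs_sub _ _
      _ ≤ ρ + ρ := add_le_add h1 h2
  set Mγ := ∫ z, |γ z| with hMγdef
  -- integrability of products
  have hIuu : Integrable (fun x => u x * u x) volume := tb_integrable_mul huA huA huρ huρ
  have hIuv : Integrable (fun x => u x * v x) volume := tb_integrable_mul huA hvA huρ hvρ
  have hIvu : Integrable (fun x => v x * u x) volume := tb_integrable_mul hvA huA hvρ huρ
  have hIvv : Integrable (fun x => v x * v x) volume := tb_integrable_mul hvA hvA hvρ hvρ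
  have hIww : Integrable (fun x => (u x - v x) * (u x - v x)) volume :=
    tb_integrable_mul hwA hwA hwρ hwρ
  have hcuA : AEStronglyMeasurable (conv γ u) volume := conv_aesm γ hγL1 huA
  have hcvA : AEStronglyMeasurable (conv γ v) volume := conv_aesm γ hγL1 hvA
  have hcuB : ∀ᵐ x, |conv γ u x| ≤ ρ * Mγ :=
    Filter.Eventually.of_forall (conv_bound γ hγL1 huA huρ)
  have hcvB : ∀ᵐ x, |conv γ v x| ≤ ρ * Mγ :=
    Filter.Eventually.of_forall (conv_bound γ hγL1 hvA hvρ)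
  have hQuu : Integrable (fun x => conv γ u x * u x) volume :=
    tb_integrable_mul hcuA huA hcuB huρ
  have hQuv : Integrable (fun x => conv γ u x * v x) volume :=
    tb_integrable_mul hcuA hvA hcuB hvρ
  have hQvu : Integrable (fun x => conv γ v x * u x) volume :=
    tb_integrable_mul hcvA huA hcvB huρ
  have hQvv : Integrable (fun x => conv γ v x * v x) volume :=
    tb_integrable_mul hcvA hvA hcvB hvρ
  -- ψ measurability, boundedness, integrability
  have hψcont : ContinuousOn ψ (Set.Icc (-ρ) ρ) := fun s hs => (hψ s hs).continuousWithinAt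
  have hψ'cont : ContinuousOn ψ' (Set.Icc (-ρ) ρ) := fun s hs => (hψ' s hs).continuousWithinAt
  obtain ⟨Mψ, hMψ⟩ := isCompact_Icc.exists_bound_of_continuousOn hψcont
  obtain ⟨Mψ', hMψ'⟩ := isCompact_Icc.exists_bound_of_continuousOn hψ'cont
  have huIcc : ∀ᵐ x, u x ∈ Set.Icc (-ρ) ρ := by
    filter_upwards [huρ] with x hx
    exact Set.mem_Icc.2 (abs_le.1 hx)
  have hvIcc : ∀ᵐ x, v x ∈ Set.Icc (-ρ) ρ := by
    filter_upwards [hvρ] with x hx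
    exact Set.mem_Icc.2 (abs_le.1 hx)
  have hclamp : ∀ (φ : ℝ → ℝ), ContinuousOn φ (Set.Icc (-ρ) ρ) →
      ∀ {f : Torus n L → ℝ}, AEStronglyMeasurable f volume → (∀ᵐ x, f x ∈ Set.Icc (-ρ) ρ) →
      AEStronglyMeasurable (fun x => φ (f x)) volume := by
    intro φ hφ f hf hfI
    have hc : Continuous (fun s => φ ((Set.projIcc (-ρ) ρ hρρ s : Set.Icc (-ρ) ρ) : ℝ)) :=
      hφ.comp_continuous (continuous_subtype_val.comp continuous_projIcc)
        (fun s => Subtype.coe_prop _)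
    refine (hc.comp_aestronglyMeasurable hf).congr ?_
    filter_upwards [hfI] with x hx
    show φ ((Set.projIcc (-ρ) ρ hρρ (f x) : Set.Icc (-ρ) ρ) : ℝ) = φ (f x)
    rw [Set.projIcc_of_mem hρρ hx]
  have hψuA : AEStronglyMeasurable (fun x => ψ (u x)) volume := hclamp ψ hψcont huA huIcc
  have hψvA : AEStronglyMeasurable (fun x => ψ (v x)) volume := hclamp ψ hψcont hvA hvIcc
  have hψ'vA : AEStronglyMeasurable (fun x => ψ' (v x)) volume := hclamp ψ' hψ'cont hvA hvIcc
  have hPu : Integrable (fun x => ψ (u x)) volume := by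
    refine tb_integrable (M := Mψ) hψuA ?_
    filter_upwards [huIcc] with x hx
    simpa [Real.norm_eq_abs] using hMψ _ hx
  have hPv : Integrable (fun x => ψ (v x)) volume := by
    refine tb_integrable (M := Mψ) hψvA ?_
    filter_upwards [hvIcc] with x hx
    simpa [Real.norm_eq_abs] using hMψ _ hx
  have hψ'vB : ∀ᵐ x, |ψ' (v x)| ≤ Mψ' := by
    filter_upwards [hvIcc] with x hx
    simpa [Real.norm_eq_abs] using hMψ' _ hx
  have hR : Integrable (fun x => ψ' (v x) * (u x - v x)) volume :=
    tb_integrable_mul hψ'vA hwA hψ'vB hwρ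
  -- key identities
  have ecomm : ∫ x, v x * u x = ∫ x, u x * v x :=
    integral_congr_ae (Filter.Eventually.of_forall fun x => mul_comm _ _)
  have e1 : ∫ x, (u x - v x) * (u x - v x)
      = (∫ x, u x * u x) - 2 * (∫ x, u x * v x) + ∫ x, v x * v x := by
    have h := ip_sub_sub hIuu hIuv hIvu hIvv
    rw [ecomm] at h
    linarith
  have e2 : ∫ x, conv γ v x * (u x - v x)
      = (∫ x, conv γ v x * u x) - ∫ x, conv γ v x * v x := ip_mul_sub hQvu hQvv
  have e3 : ∫ x, v x * (u x - v x) = (∫ x, u x * v x) - ∫ x, v x * v x := by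
    have h := ip_mul_sub hIvu hIvv
    rw [ecomm] at h
    exact h
  have e5 : ∫ x, conv γ u x * v x = ∫ x, conv γ v x * u x := by
    have h := ip_conv_symm γ hγL1 hγeven huA hvA huρ hvρ
    unfold ip at h
    exact h
  have e4 : ∫ x, conv γ (u - v) x * (u x - v x)
      = (∫ x, conv γ u x * u x) - 2 * (∫ x, conv γ v x * u x) + ∫ x, conv γ v x * v x := by
    have h0 : ∫ x, conv γ (u - v) x * (u x - v x)
        = ∫ x, (conv γ u x - conv γ v x) * (u x - v x) := by
      refine integral_congr_ae (Filter.Eventually.of_forall fun x => ?_)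
      show conv γ (u - v) x * (u x - v x) = (conv γ u x - conv γ v x) * (u x - v x)
      rw [conv_sub γ hγL1 huA hvA huρ hvρ x]
    have h := ip_sub_sub hQuu hQuv hQvu hQvv
    rw [e5] at h
    rw [h0, h]
    ring
  have hQw0 : 0 ≤ ∫ x, conv γ (u - v) x * (u x - v x) := by
    have h := hγpsd (u - v) (hu2.sub hv2)
    unfold ip at h
    simpa [Pi.sub_apply] using h
  have hW0 : 0 ≤ ∫ x, (u x - v x) * (u x - v x) :=
    integral_nonneg fun x => mul_self_nonneg _
  -- Taylor estimate integrated
  have htay : ∀ᵐ x, ψ (u x) - ψ (v x) - ψ' (v x) * (u x - v x)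
      ≤ C / 2 * ((u x - v x) * (u x - v x)) := by
    filter_upwards [huIcc, hvIcc] with x h1 h2
    have := taylor2_bound ψ ψ' ψ'' hψ hψ' hψ'' h1 h2
    nlinarith [this]
  have e7 : (∫ x, ψ (u x)) - (∫ x, ψ (v x)) - (∫ x, ψ' (v x) * (u x - v x))
      ≤ C / 2 * ∫ x, (u x - v x) * (u x - v x) := by
    have hA : Integrable (fun x => ψ (u x) - ψ (v x)) volume := hPu.sub hPv
    have hB : Integrable (fun x => ψ (u x) - ψ (v x) - ψ' (v x) * (u x - v x)) volume :=
      hA.sub hR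
    have h := integral_mono_ae hB (hIww.const_mul (C / 2)) htay
    rw [integral_sub hA hR, integral_sub hPu hPv, integral_const_mul] at h
    exact h
  have e6 : ∫ x, (1 / 2 * (ψ (u x) + ψ (v x)) + 1 / 2 * ψ' (v x) * (u x - v x))
      = 1 / 2 * ((∫ x, ψ (u x)) + (∫ x, ψ (v x)) + ∫ x, ψ' (v x) * (u x - v x)) := by
    have hrw : (fun x => 1 / 2 * (ψ (u x) + ψ (v x)) + 1 / 2 * ψ' (v x) * (u x - v x))
        = fun x => 1 / 2 * ((ψ (u x) + ψ (v x)) + ψ' (v x) * (u x - v x)) := by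
      funext x; ring
    have hA2 : Integrable (fun x => ψ (u x) + ψ (v x)) volume := hPu.add hPv
    rw [hrw, integral_const_mul, integral_add hA2 hR, integral_add hPu hPv]
  -- coefficient inequality
  have hcoef : (ξ + C) / 4 ≤ 1 / (2 * τ) := by
    rw [div_le_div_iff₀ (by norm_num) (by linarith)]
    nlinarith
  have key : 0 ≤ (1 / (2 * τ) - (ξ + C) / 4)
      * ((∫ x, u x * u x) - 2 * (∫ x, u x * v x) + ∫ x, v x * v x) := by
    refine mul_nonneg (by linarith) ?_
    rw [← e1]; exact hW0
  have hQw0' : 0 ≤ (∫ x, conv γ u x * u x) - 2 * (∫ x, conv γ v x * u x)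
      + ∫ x, conv γ v x * v x := by
    rw [← e4]; exact hQw0
  -- assemble
  unfold energySmooth objJ2Smooth gfun ffun ip
  simp only [Pi.sub_apply]
  rw [e1, e2, e3, e6]
  rw [e1] at e7
  nlinarith [key, hQw0', e7]

end
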